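/- arXiv:2402.01966 — 6 statements merged into one kernel-verified Lean document; each statement's English description precedes it below -/
import Mathlib

section
/- Let φ be a real number with 0 < |φ| < 1 and let (ε_t)_{t∈ℤ} be a sequence of real numbers such that ∑_{t∈ℤ} r^{|t|} |ε_t| < ∞ for every r ∈ (0,1). Then a sequence (x_t)_{t∈ℤ} of real numbers satisfies x_t = φ x_{t-1} + ε_t for all t ∈ ℤ if and only if there exists v ∈ ℝ such that x_t = φ^t v + ∑_{k=0}^∞ φ^k ε_{t-k} for all t ∈ ℤ. -/
open Filter Topology

/-- A two-sided real sequence is subexponential. -/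
def Subexp (y : ℤ → ℝ) : Prop :=
  ∀ r ∈ Set.Ioo (0 : ℝ) 1, Summable fun t : ℤ => r ^ t.natAbs * |y t|

/-! Subtracting the causal solution `∑ₖ φᵏ ε_{t-k}` reduces the equation `x_t = φ x_{t-1} + ε_t`
to the homogeneous one `y_t = φ y_{t-1}`, whose solutions are exactly `y_t = φᵗ v` once `φ ≠ 0`.
The causal series converges because `ε` is dominated by `r^{-|t|}` for any `r ∈ (|φ|, 1)`. -/

theorem forall_eq_mul_sub_one_iff_exists_eq_zpow_mul {K : Type*} [Field K] {φ : K} (hφ : φ ≠ 0)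
    (y : ℤ → K) : (∀ t, y t = φ * y (t - 1)) ↔ ∃ v, ∀ t, y t = φ ^ t * v := by
  constructor
  · intro hy
    refine ⟨y 0, fun t => ?_⟩
    induction t using Int.induction_on with
    | zero => simp
    | succ n ih => rw [hy, add_sub_cancel_right, ih, zpow_add_one₀ hφ]; ring
    | pred n ih =>
      have h := hy (-n)
      rw [ih] at h
      rw [zpow_sub_one₀ hφ]
      field_simp
      linear_combination -h
  · rintro ⟨v, hv⟩ t
    rw [hv, hv, zpow_sub_one₀ hφ]
    field_simp

namespace Subexp

variable {ε : ℤ → ℝ}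

theorem summable_pow_mul_sub (hε : Subexp ε) {φ : ℝ} (hφ : |φ| < 1) (t : ℤ) :
    Summable fun k : ℕ => φ ^ k * ε (t - k) := by
  obtain ⟨r, hφr, hr1⟩ := exists_between hφ
  have hr0 : 0 < r := (abs_nonneg φ).trans_lt hφr
  have hshift : Summable fun k : ℕ => r ^ (t - k).natAbs * |ε (t - k)| :=
    (hε r ⟨hr0, hr1⟩).comp_injective fun a b hab => by simpa using hab
  refine (hshift.mul_left (r ^ t.natAbs)⁻¹).of_norm_bounded fun k => ?_
  have hpow : |φ| ^ k * r ^ t.natAbs ≤ r ^ (t - k).natAbs :=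
    calc |φ| ^ k * r ^ t.natAbs ≤ r ^ (k + t.natAbs) := by
          rw [pow_add]; gcongr
      _ ≤ r ^ (t - k).natAbs := pow_le_pow_of_le_one hr0.le hr1.le (by omega)
  rw [norm_mul, Real.norm_eq_abs, Real.norm_eq_abs, abs_pow,
    le_inv_mul_iff₀ (by positivity)]
  calc r ^ t.natAbs * (|φ| ^ k * |ε (t - k)|) = |φ| ^ k * r ^ t.natAbs * |ε (t - k)| := by ring
    _ ≤ r ^ (t - k).natAbs * |ε (t - k)| := by gcongr

theorem tsum_pow_mul_sub_eq (hε : Subexp ε) {φ : ℝ} (hφ : |φ| < 1) (t : ℤ) :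
    ∑' k : ℕ, φ ^ k * ε (t - k) = φ * ∑' k : ℕ, φ ^ k * ε (t - 1 - k) + ε t := by
  rw [(hε.summable_pow_mul_sub hφ t).tsum_eq_zero_add, ← tsum_mul_left, add_comm]
  congr 1
  · refine tsum_congr fun k => ?_
    rw [pow_succ, Nat.cast_succ, sub_add_eq_sub_sub_swap]
    ring
  · simp

end Subexp

theorem stmt_0 (φ : ℝ) (hφ0 : 0 < |φ|) (hφ1 : |φ| < 1)
    (ε : ℤ → ℝ) (hε : Subexp ε) (x : ℤ → ℝ) :
    (∀ t : ℤ, x t = φ * x (t - 1) + ε t) ↔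
      ∃ v : ℝ, ∀ t : ℤ, x t = φ ^ t * v + ∑' k : ℕ, φ ^ k * ε (t - k) := by
  set S : ℤ → ℝ := fun t => ∑' k : ℕ, φ ^ k * ε (t - k)
  have hS : ∀ t, S t = φ * S (t - 1) + ε t := hε.tsum_pow_mul_sub_eq hφ1
  calc (∀ t, x t = φ * x (t - 1) + ε t) ↔ ∀ t, (x - S) t = φ * (x - S) (t - 1) := by
        refine forall_congr' fun t => ?_
        rw [Pi.sub_apply, Pi.sub_apply, hS t]
        constructor <;> intro h <;> linarith
    _ ↔ ∃ v, ∀ t, (x - S) t = φ ^ t * v :=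
        forall_eq_mul_sub_one_iff_exists_eq_zpow_mul (abs_pos.mp hφ0) _
    _ ↔ ∃ v, ∀ t, x t = φ ^ t * v + S t := by
        simp only [Pi.sub_apply, sub_eq_iff_eq_add]
end

section
/- Let φ be a real number with 0 < |φ| < 1 and let (ε_t)_{t∈ℤ} be a subexponential sequence of real numbers. If (x_t)_{t∈ℤ} satisfies x_t = φ x_{t-1} + ε_t for all t ∈ ℤ, then the limit lim_{n→∞} φ^n x_{-n} exists, and x_t = φ^t (lim_{n→∞} φ^n x_{-n}) + ∑_{k=0}^∞ φ^k ε_{t-k} for each t ∈ ℤ. -/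
open Filter Topology

/-! Subtracting the causal moving average `S t = ∑ₖ φᵏ ε (t - k)`, which converges because a
subexponential sequence is summable against every geometric weight and solves the same
recursion, leaves a solution of `y t = φ y (t - 1)`, hence `y t = φ ^ t y 0`. Unrolling the
recursion `n` steps gives `φⁿ x (-n) = x 0 - ∑_{k<n} φᵏ ε (-k)`, whose limit is `y 0`. -/

theorem Subexp.summable_pow_mul_sub_s1 {ε : ℤ → ℝ} (hε : Subexp ε) {φ : ℝ} (hφ0 : 0 < |φ|)
    (hφ1 : |φ| < 1) (t : ℤ) : Summable fun k : ℕ => φ ^ k * ε (t - k) := by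
  have hshift : Summable fun k : ℕ => |φ| ^ (t - k).natAbs * |ε (t - k)| :=
    (hε |φ| ⟨hφ0, hφ1⟩).comp_injective fun a b h => by simpa using h
  refine .of_norm_bounded (hshift.mul_left (|φ| ^ t.natAbs)⁻¹) fun k => ?_
  -- since `|t - k| ≤ k + |t|`
  have hpow : |φ| ^ (k + t.natAbs) ≤ |φ| ^ (t - k).natAbs :=
    pow_le_pow_of_le_one (abs_nonneg _) hφ1.le (by omega)
  rw [Real.norm_eq_abs, abs_mul, abs_pow, ← mul_assoc]
  gcongr
  rwa [le_inv_mul_iff₀ (by positivity), mul_comm, ← pow_add]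

theorem tsum_pow_mul_sub_eq {K : Type*} [Field K] [TopologicalSpace K] [IsTopologicalRing K]
    [T2Space K] {φ : K} {ε : ℤ → K} {t : ℤ} (h : Summable fun k : ℕ => φ ^ k * ε (t - k)) :
    ∑' k : ℕ, φ ^ k * ε (t - k) = ε t + φ * ∑' k : ℕ, φ ^ k * ε (t - 1 - k) := by
  rw [h.tsum_eq_zero_add, ← tsum_mul_left]
  congr 1
  · simp
  · refine tsum_congr fun k => ?_
    rw [pow_succ, Nat.cast_succ, sub_add_eq_sub_sub_swap]
    ring

theorem eq_zpow_mul_of_eq_mul_sub_one {K : Type*} [Field K] {φ : K} (hφ : φ ≠ 0) {y : ℤ → K}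
    (hy : ∀ t, y t = φ * y (t - 1)) (t : ℤ) : y t = φ ^ t * y 0 := by
  induction t using Int.induction_on with
  | zero => simp
  | succ n ih => rw [hy, add_sub_cancel_right, ih, zpow_add_one₀ hφ]; ring
  | pred n ih =>
    have h := hy (-n)
    rw [ih] at h
    rw [zpow_sub_one₀ hφ, mul_right_comm, h]
    field_simp

theorem pow_mul_sub_eq_sub_sum {R : Type*} [CommRing R] {φ : R} {ε x : ℤ → R}
    (hx : ∀ t, x t = φ * x (t - 1) + ε t) (t : ℤ) (n : ℕ) :
    φ ^ n * x (t - n) = x t - ∑ k ∈ Finset.range n, φ ^ k * ε (t - k) := by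
  induction n with
  | zero => simp
  | succ n ih =>
    have hstep := hx (t - n)
    rw [Finset.sum_range_succ, Nat.cast_succ, ← sub_sub]
    linear_combination ih - φ ^ n * hstep

theorem stmt_1 (φ : ℝ) (hφ0 : 0 < |φ|) (hφ1 : |φ| < 1)
    (ε : ℤ → ℝ) (hε : Subexp ε) (x : ℤ → ℝ)
    (hx : ∀ t : ℤ, x t = φ * x (t - 1) + ε t) :
    ∃ L : ℝ, Tendsto (fun n : ℕ => φ ^ n * x (-(n : ℤ))) atTop (𝓝 L) ∧
      ∀ t : ℤ, x t = φ ^ t * L + ∑' k : ℕ, φ ^ k * ε (t - k) := by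
  have hsum := hε.summable_pow_mul_sub_s1 hφ0 hφ1
  set S : ℤ → ℝ := fun t => ∑' k : ℕ, φ ^ k * ε (t - k)
  have hhom : ∀ t, x t - S t = φ ^ t * (x 0 - S 0) :=
    eq_zpow_mul_of_eq_mul_sub_one (abs_pos.mp hφ0) fun t => by
      rw [hx t, show S t = _ from tsum_pow_mul_sub_eq (hsum t)]
      ring
  refine ⟨x 0 - S 0, ?_, fun t => by linarith [hhom t]⟩
  have hlim := ((hsum 0).hasSum.tendsto_sum_nat).const_sub (x 0)
  exact hlim.congr fun n => by rw [← pow_mul_sub_eq_sub_sum hx 0 n, zero_sub]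
end

section
/- Let φ be a real number with |φ| > 1 and let (ε_t)_{t∈ℤ} be a subexponential sequence of real numbers. If (x_t)_{t∈ℤ} satisfies x_t = φ x_{t-1} + ε_t for all t ∈ ℤ and (x_t) is subexponential, then x_t = −∑_{k=1}^∞ φ^{-k} ε_{t+k} for all t ∈ ℤ; in particular there is exactly one subexponential solution. -/
open Filter Topology

/-!
With `ψ = φ⁻¹`, the series `S t = ∑ₖ ψ^k ε(t+k)` converges and is again subexponential, since a
subexponential sequence grows more slowly than `ρ⁻¹^|t|` for every `ρ < 1`, in particular for
`|ψ| < ρ < 1`. From `S t = ε t + ψ S (t+1)` one reads off that `ε - S` solves the recursion.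
The difference `d` of two subexponential solutions satisfies `d (t+n) = φ^n d t`, so the terms
`|φ|^{-|t+n|} |d (t+n)| ≥ |φ|^{-|t|} |d t|` of a summable family do not tend to zero unless `d t = 0`.
-/

section Subexp

variable {x y : ℤ → ℝ}

theorem Subexp.sub (hx : Subexp x) (hy : Subexp y) : Subexp fun t => x t - y t := by
  intro r hr
  refine ((hx r hr).add (hy r hr)).of_nonneg_of_le
    (fun t => mul_nonneg (pow_nonneg hr.1.le _) (abs_nonneg _)) fun t => ?_
  rw [← mul_add]
  exact mul_le_mul_of_nonneg_left (abs_sub _ _) (pow_nonneg hr.1.le _)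

theorem Subexp.exists_abs_le (hy : Subexp y) {ρ : ℝ} (hρ : ρ ∈ Set.Ioo (0 : ℝ) 1) :
    ∃ C, ∀ t, |y t| ≤ C * ρ⁻¹ ^ t.natAbs := by
  refine ⟨∑' u : ℤ, ρ ^ u.natAbs * |y u|, fun t => ?_⟩
  have hle := (hy ρ hρ).le_tsum t fun _ _ => mul_nonneg (pow_nonneg hρ.1.le _) (abs_nonneg _)
  rw [inv_pow, ← div_eq_mul_inv, le_div_iff₀ (pow_pos hρ.1 _)]
  linarith

theorem Subexp.of_eventually_abs_le
    (h : ∀ᶠ ρ in 𝓝[<] (1 : ℝ), ∃ C, ∀ t, |y t| ≤ C * ρ⁻¹ ^ t.natAbs) : Subexp y := by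
  intro r hr
  obtain ⟨ρ, ⟨C, hC⟩, hrρ, hρ1⟩ := (h.and (Ioo_mem_nhdsLT hr.2)).exists
  have hρ : 0 < ρ := hr.1.trans hrρ
  have hq : Summable fun t : ℤ => C * (r / ρ) ^ t.natAbs := by
    refine Summable.mul_left C (Summable.of_nat_of_neg ?_ ?_) <;>
      simpa using summable_geometric_of_lt_one (div_nonneg hr.1.le hρ.le)
        ((div_lt_one hρ).2 hrρ)
  refine hq.of_nonneg_of_le (fun t => mul_nonneg (pow_nonneg hr.1.le _) (abs_nonneg _)) fun t => ?_
  calc r ^ t.natAbs * |y t| ≤ r ^ t.natAbs * (C * ρ⁻¹ ^ t.natAbs) :=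
        mul_le_mul_of_nonneg_left (hC t) (pow_nonneg hr.1.le _)
    _ = C * (r / ρ) ^ t.natAbs := by rw [div_eq_mul_inv, mul_pow]; ring

end Subexp

section GeometricSeries

variable {y : ℤ → ℝ} {ψ ρ : ℝ}

theorem Subexp.norm_pow_mul_le (hy : Subexp y) (hρ : ρ ∈ Set.Ioo |ψ| 1) :
    ∃ C, ∀ (t : ℤ) (k : ℕ), ‖ψ ^ k * y (t + k)‖ ≤ C * ρ⁻¹ ^ t.natAbs * (|ψ| / ρ) ^ k := by
  have hρ' : ρ ∈ Set.Ioo (0 : ℝ) 1 := ⟨(abs_nonneg ψ).trans_lt hρ.1, hρ.2⟩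
  obtain ⟨C, hC⟩ := hy.exists_abs_le hρ'
  have hC0 : 0 ≤ C := by simpa using (abs_nonneg _).trans (hC 0)
  have hρ_inv : 1 ≤ ρ⁻¹ := one_le_inv_iff₀.2 ⟨hρ'.1, hρ'.2.le⟩
  refine ⟨C, fun t k => ?_⟩
  calc ‖ψ ^ k * y (t + k)‖ = |ψ| ^ k * |y (t + k)| := by rw [Real.norm_eq_abs, abs_mul, abs_pow]
    _ ≤ |ψ| ^ k * (C * ρ⁻¹ ^ (t.natAbs + k)) := by
        gcongr
        refine (hC _).trans (mul_le_mul_of_nonneg_left (pow_le_pow_right₀ hρ_inv ?_) hC0)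
        have := Int.natAbs_add_le t k
        omega
    _ = C * ρ⁻¹ ^ t.natAbs * (|ψ| / ρ) ^ k := by rw [pow_add, div_eq_mul_inv, mul_pow]; ring

theorem abs_div_mem_Ico (hρ : ρ ∈ Set.Ioo |ψ| 1) : |ψ| / ρ ∈ Set.Ico 0 1 :=
  have hρ0 : 0 < ρ := (abs_nonneg ψ).trans_lt hρ.1
  ⟨div_nonneg (abs_nonneg ψ) hρ0.le, (div_lt_one hρ0).2 hρ.1⟩

theorem Subexp.summable_pow_mul (hy : Subexp y) (hψ : |ψ| < 1) (t : ℤ) :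
    Summable fun k : ℕ => ψ ^ k * y (t + k) := by
  obtain ⟨ρ, hρ⟩ := exists_between hψ
  obtain ⟨C, hC⟩ := hy.norm_pow_mul_le hρ
  have hq := abs_div_mem_Ico hρ
  exact .of_norm_bounded ((summable_geometric_of_lt_one hq.1 hq.2).mul_left _) (hC t)

theorem Subexp.abs_tsum_pow_mul_le (hy : Subexp y) (hρ : ρ ∈ Set.Ioo |ψ| 1) :
    ∃ C, ∀ t, |∑' k : ℕ, ψ ^ k * y (t + k)| ≤ C * ρ⁻¹ ^ t.natAbs := by
  obtain ⟨C, hC⟩ := hy.norm_pow_mul_le hρ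
  have hq := abs_div_mem_Ico hρ
  refine ⟨C * (1 - |ψ| / ρ)⁻¹, fun t => ?_⟩
  rw [← Real.norm_eq_abs, mul_right_comm]
  exact tsum_of_norm_bounded ((hasSum_geometric_of_lt_one hq.1 hq.2).mul_left _) (hC t)

theorem Subexp.tsum_pow_mul (hy : Subexp y) (hψ : |ψ| < 1) :
    Subexp fun t => ∑' k : ℕ, ψ ^ k * y (t + k) := by
  refine Subexp.of_eventually_abs_le ?_
  filter_upwards [Ioo_mem_nhdsLT hψ] with ρ hρ
  exact hy.abs_tsum_pow_mul_le hρ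

theorem tsum_pow_mul_eq_add {t : ℤ} (hsum : Summable fun k : ℕ => ψ ^ k * y (t + k)) :
    ∑' k : ℕ, ψ ^ k * y (t + k) = y t + ψ * ∑' k : ℕ, ψ ^ k * y (t + 1 + k) := by
  rw [hsum.tsum_eq_zero_add, ← tsum_mul_left]
  congr 1
  · simp
  · refine tsum_congr fun k => ?_
    rw [pow_succ', mul_assoc]
    push_cast
    ring_nf

end GeometricSeries

theorem Subexp.eq_zero_of_eq_mul_sub_one {d : ℤ → ℝ} {φ : ℝ} (hφ : 1 < |φ|)
    (hd : ∀ t, d t = φ * d (t - 1)) (hsub : Subexp d) (t : ℤ) : d t = 0 := by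
  set r := |φ|⁻¹
  have hr : r ∈ Set.Ioo (0 : ℝ) 1 := ⟨by positivity, inv_lt_one_of_one_lt₀ hφ⟩
  have hshift (n : ℕ) : d (t + n) = φ ^ n * d t := by
    induction n with
    | zero => simp
    | succ n ih =>
      rw [hd, show t + ↑(n + 1) - 1 = t + n by push_cast; ring, ih, pow_succ]
      ring
  have hle (n : ℕ) : r ^ t.natAbs * |d t| ≤ r ^ (t + n).natAbs * |d (t + n)| := by
    have hrφ : r ^ n * |φ| ^ n = 1 := by
      rw [← mul_pow, inv_mul_cancel₀ (by positivity), one_pow]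
    calc r ^ t.natAbs * |d t| = r ^ (t.natAbs + n) * |d (t + n)| := by
          rw [hshift, abs_mul, abs_pow, pow_add]
          linear_combination (-(r ^ t.natAbs * |d t|)) * hrφ
      _ ≤ r ^ (t + n).natAbs * |d (t + n)| :=
          mul_le_mul_of_nonneg_right
            (pow_le_pow_of_le_one hr.1.le hr.2.le (Int.natAbs_add_le t n)) (abs_nonneg _)
  have hinj : Function.Injective fun n : ℕ => t + n := fun _ _ h => by simpa using h
  have hlim : Tendsto (fun n : ℕ => r ^ (t + n).natAbs * |d (t + n)|) atTop (𝓝 0) :=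
    (hsub r hr).tendsto_cofinite_zero.comp (Nat.cofinite_eq_atTop ▸ hinj.tendsto_cofinite)
  have hnonpos : r ^ t.natAbs * |d t| ≤ 0 := ge_of_tendsto' hlim hle
  exact abs_nonpos_iff.1 (nonpos_of_mul_nonpos_right hnonpos (pow_pos hr.1 t.natAbs))

theorem zpow_neg_natCast_sub_one (φ : ℝ) (k : ℕ) : φ ^ (-(k : ℤ) - 1) = φ⁻¹ ^ (k + 1) := by
  rw [show -(k : ℤ) - 1 = -((k + 1 : ℕ) : ℤ) by push_cast; ring, zpow_neg, zpow_natCast, inv_pow]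

theorem stmt_4 (φ : ℝ) (hφ : 1 < |φ|)
    (ε : ℤ → ℝ) (hε : Subexp ε) :
    (∀ x : ℤ → ℝ, (∀ t : ℤ, x t = φ * x (t - 1) + ε t) → Subexp x →
      ∀ t : ℤ, x t = -∑' k : ℕ, φ ^ (-(k : ℤ) - 1) * ε (t + k + 1)) ∧
    ∃! x : ℤ → ℝ, (∀ t : ℤ, x t = φ * x (t - 1) + ε t) ∧ Subexp x := by
  have hφ0 : φ ≠ 0 := by rintro rfl; simp at hφ; linarith
  have hψ : |φ⁻¹| < 1 := by rw [abs_inv]; exact inv_lt_one_of_one_lt₀ hφ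
  set S : ℤ → ℝ := fun t => ∑' k : ℕ, φ⁻¹ ^ k * ε (t + k)
  have hS (t : ℤ) : S t = ε t + φ⁻¹ * S (t + 1) := tsum_pow_mul_eq_add (hε.summable_pow_mul hψ t)
  have hsol (t : ℤ) : ε t - S t = φ * (ε (t - 1) - S (t - 1)) + ε t := by
    rw [hS (t - 1), sub_add_cancel]; field_simp; ring
  have hsub : Subexp fun t => ε t - S t := hε.sub (hε.tsum_pow_mul hψ)
  have huniq (x : ℤ → ℝ) (hx : ∀ t, x t = φ * x (t - 1) + ε t) (hxs : Subexp x) :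
      x = fun t => ε t - S t := by
    funext t
    have := (hxs.sub hsub).eq_zero_of_eq_mul_sub_one hφ (fun t => by rw [hx t, hsol t]; ring) t
    linarith
  have hformula (t : ℤ) : ε t - S t = -∑' k : ℕ, φ ^ (-(k : ℤ) - 1) * ε (t + k + 1) := by
    rw [hS t, sub_add_cancel_left, ← tsum_mul_left]
    congr 1
    refine tsum_congr fun k => ?_
    rw [zpow_neg_natCast_sub_one, pow_succ', add_right_comm, mul_assoc]
  exact ⟨fun x hx hxs t => by rw [huniq x hx hxs]; exact hformula t,
    ⟨_, ⟨hsol, hsub⟩, fun x hx => huniq x hx.1 hx.2⟩⟩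
end

section
/- Let φ ∈ {−1, 1} and let (ε_t)_{t∈ℤ} be a subexponential sequence of real numbers. Then every solution (x_t)_{t∈ℤ} of x_t = φ x_{t-1} + ε_t (t ∈ ℤ) is subexponential. -/
theorem summable_pow_natAbs {ρ : ℝ} (hρ₀ : 0 ≤ ρ) (hρ₁ : ρ < 1) :
    Summable fun t : ℤ => ρ ^ t.natAbs :=
  .of_nat_of_neg (by simpa using summable_geometric_of_lt_one hρ₀ hρ₁)
    (by simpa using summable_geometric_of_lt_one hρ₀ hρ₁)

theorem Subexp.of_forall_exists_le {y : ℤ → ℝ}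
    (h : ∀ r ∈ Set.Ioo (0 : ℝ) 1, ∃ C, ∀ t : ℤ, r ^ t.natAbs * |y t| ≤ C) : Subexp y := by
  intro r ⟨hr₀, hr₁⟩
  have hρ : √r ∈ Set.Ioo (0 : ℝ) 1 :=
    ⟨Real.sqrt_pos.2 hr₀, (Real.sqrt_lt' one_pos).2 (by simpa using hr₁)⟩
  obtain ⟨C, hC⟩ := h _ hρ
  refine .of_nonneg_of_le (fun t => by positivity) (fun t => ?_)
    ((summable_pow_natAbs hρ.1.le hρ.2).mul_right C)
  calc r ^ t.natAbs * |y t| = √r ^ t.natAbs * (√r ^ t.natAbs * |y t|) := by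
        rw [← mul_assoc, ← mul_pow, Real.mul_self_sqrt hr₀.le]
    _ ≤ √r ^ t.natAbs * C := by gcongr; exact hC t

theorem le_add_tsum_of_le_add {ι : Type*} {a : ℕ → ℝ} {b : ι → ℝ} (hb : Summable b)
    (hb₀ : ∀ i, 0 ≤ b i) {g : ℕ → ι} (hg : g.Injective)
    (h : ∀ n, a (n + 1) ≤ a n + b (g n)) (n : ℕ) :
    a n ≤ a 0 + ∑' i, b i := by
  have telescope : ∀ n, a n ≤ a 0 + ∑ k ∈ Finset.range n, b (g k) := by
    intro n
    induction n with
    | zero => simp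
    | succ n ih => rw [Finset.sum_range_succ]; linarith [h n]
  calc a n ≤ a 0 + ∑ i ∈ (Finset.range n).map ⟨g, hg⟩, b i := by
        rw [Finset.sum_map]; exact telescope n
    _ ≤ a 0 + ∑' i, b i := by gcongr; exact hb.sum_le_tsum _ fun i _ => hb₀ i

theorem pow_natAbs_mul_abs_le {x ε : ℤ → ℝ} (h : ∀ t, |(|x t| - |x (t - 1)|)| ≤ |ε t|)
    {ρ : ℝ} (hρ₀ : 0 ≤ ρ) (hρ₁ : ρ ≤ 1) (hε : Summable fun t : ℤ => ρ ^ t.natAbs * |ε t|)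
    (t : ℤ) : ρ ^ t.natAbs * |x t| ≤ |x 0| + ∑' s : ℤ, ρ ^ s.natAbs * |ε s| := by
  have hb₀ : ∀ s : ℤ, 0 ≤ ρ ^ s.natAbs * |ε s| := fun s => by positivity
  have hpow : ∀ n : ℕ, ρ ^ (n + 1) ≤ ρ ^ n := fun n => pow_le_pow_of_le_one hρ₀ hρ₁ n.le_succ
  obtain ⟨n, rfl | rfl⟩ := t.eq_nat_or_neg
  · suffices ∀ n : ℕ, ρ ^ (n + 1) * |x ↑(n + 1)| ≤ ρ ^ n * |x n| + ρ ^ (n + 1) * |ε ↑(n + 1)| by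
      simpa using le_add_tsum_of_le_add (a := fun n : ℕ => ρ ^ n * |x n|) hε hb₀
        (g := fun n : ℕ => ((n + 1 : ℕ) : ℤ)) (fun m n h => by simpa using h) this n
    intro n
    have hstep := (abs_le.1 (h (n + 1))).2
    simp only [add_sub_cancel_right] at hstep
    calc ρ ^ (n + 1) * |x ↑(n + 1)| ≤ ρ ^ (n + 1) * |x n| + ρ ^ (n + 1) * |ε (n + 1)| := by
          push_cast; rw [← mul_add]; gcongr; linarith
      _ ≤ ρ ^ n * |x n| + ρ ^ (n + 1) * |ε (n + 1)| := by
          gcongr ?_ * _ + _; exact hpow n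
      _ = _ := by push_cast; rfl
  · suffices ∀ n : ℕ, ρ ^ (n + 1) * |x (-↑(n + 1))| ≤ ρ ^ n * |x (-n)| + ρ ^ n * |ε (-n)| by
      simpa using le_add_tsum_of_le_add (a := fun n : ℕ => ρ ^ n * |x (-n)|) hε hb₀
        (g := fun n : ℕ => -(n : ℤ)) (fun m n h => by simpa using h) (by simpa using this) n
    intro n
    have hstep := (abs_le.1 (h (-n))).1
    calc ρ ^ (n + 1) * |x (-↑(n + 1))| ≤ ρ ^ (n + 1) * (|x (-n)| + |ε (-n)|) := by
          gcongr; rw [show -((n + 1 : ℕ) : ℤ) = -n - 1 by push_cast; ring]; linarith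
      _ ≤ ρ ^ n * (|x (-n)| + |ε (-n)|) := by gcongr ?_ * _; exact hpow n
      _ = _ := mul_add _ _ _

theorem stmt_6 (φ : ℝ) (hφ : φ = -1 ∨ φ = 1) (ε : ℤ → ℝ) (hε : Subexp ε)
    (x : ℤ → ℝ) (hx : ∀ t : ℤ, x t = φ * x (t - 1) + ε t) :
    Subexp x := by
  have hφ₁ : |φ| = 1 := by rcases hφ with rfl | rfl <;> simp
  have hstep : ∀ t, |(|x t| - |x (t - 1)|)| ≤ |ε t| := fun t => by
    simpa [hφ₁, abs_mul, hx t] using abs_abs_sub_abs_le_abs_sub (x t) (φ * x (t - 1))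
  exact .of_forall_exists_le fun r hr =>
    ⟨_, pow_natAbs_mul_abs_le hstep hr.1.le hr.2.le (hε r hr)⟩
end

section
/- Let M be a real N×N matrix with spectral radius ρ(M) < 1 and let (ε_t)_{t∈ℤ} be a subexponential sequence in ℝ^N. Then the sequence y_t := ∑_{k=0}^∞ M^k ε_{t-k} (t ∈ ℤ) is itself subexponential, i.e. ∑_{t∈ℤ} r^{|t|} ‖y_t‖ < ∞ for every r ∈ (0,1). -/
/-!
Gelfand's formula turns `ρ(M) < 1` into a bound `‖M ^ k‖ ≤ C s ^ k` with `s < 1`, so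
`‖y_t‖ ≤ C ∑ₖ s ^ k ‖ε_{t-k}‖`. For `s < r ≤ 1` the triangle inequality `|t| ≥ |t - k| - k` gives
`r ^ |t| s ^ k ≤ r ^ |t - k| (s / r) ^ k`, and after the shear `(t, k) ↦ (t - k, k)` the
resulting double series is a product of the summable series for `ε` and a geometric series.
Smaller weights `r ≤ s` follow by monotonicity in `r`.
-/

open Matrix Filter
open scoped Matrix.Norms.L2Operator ENNReal NNReal

section BanachAlgebra

variable {A : Type*} [NormedRing A] [NormedAlgebra ℂ A] [CompleteSpace A]

lemma spectralRadius_lt_one_of_forall_norm_lt_one {a : A} (h : ∀ z ∈ spectrum ℂ a, ‖z‖ < 1) :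
    spectralRadius ℂ a < 1 := by
  rcases (spectrum ℂ a).eq_empty_or_nonempty with he | hne
  · simp [spectralRadius, he]
  · exact spectrum.spectralRadius_lt_of_forall_lt_of_nonempty hne fun z hz => by
      simpa [← NNReal.coe_lt_coe] using h z hz

lemma exists_norm_pow_le_mul_pow_of_spectralRadius_lt {a : A} {s : ℝ≥0}
    (hs : spectralRadius ℂ a < s) : ∃ C, ∀ n : ℕ, ‖a ^ n‖ ≤ C * (s : ℝ) ^ n := by
  have hs0 : s ≠ 0 := by rintro rfl; exact not_lt_zero hs
  have hev : ∀ᶠ n : ℕ in atTop, ‖a ^ n‖ ≤ (s : ℝ) ^ n := by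
    have hgelfand := spectrum.pow_nnnorm_pow_one_div_tendsto_nhds_spectralRadius a
    filter_upwards [hgelfand.eventually_lt_const hs, eventually_gt_atTop 0] with n hn hn0
    rw [one_div, ENNReal.rpow_inv_lt_iff (by positivity), ENNReal.rpow_natCast] at hn
    exact_mod_cast hn.le
  have hO : (fun n : ℕ => ‖a ^ n‖) =O[atTop] fun n => (s : ℝ) ^ n :=
    Asymptotics.IsBigO.of_bound 1 (by simpa using hev)
  simpa using (Asymptotics.isBigO_nat_atTop_iff fun n h => absurd h (by positivity)).mp hO

end BanachAlgebra

section MatrixBounds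

variable {n : Type*} [Fintype n] [DecidableEq n]

lemma norm_toEuclideanLin_le_norm_map_complex (B : Matrix n n ℝ) (v : EuclideanSpace ℝ n) :
    ‖B.toEuclideanLin v‖ ≤ ‖B.map (algebraMap ℝ ℂ)‖ * ‖v‖ := by
  let w : EuclideanSpace ℂ n := WithLp.toLp 2 fun i => (v i : ℂ)
  have hw : ‖w‖ = ‖v‖ := by simp [EuclideanSpace.norm_eq, w]
  have hBw : B.map (algebraMap ℝ ℂ) *ᵥ w = fun i => ((B *ᵥ v) i : ℂ) := by
    ext i
    simp [mulVec, dotProduct, w]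
  have h := Matrix.l2_opNorm_mulVec (B.map (algebraMap ℝ ℂ)) w
  rw [hBw, hw] at h
  simpa [EuclideanSpace.norm_eq] using h

lemma exists_norm_toEuclideanLin_pow_le (M : Matrix n n ℝ)
    (hρ : ∀ μ ∈ spectrum ℂ (M.map (algebraMap ℝ ℂ)), ‖μ‖ < 1) :
    ∃ s : ℝ, 0 ≤ s ∧ s < 1 ∧ ∃ C, ∀ (k : ℕ) (v : EuclideanSpace ℝ n),
      ‖(M ^ k).toEuclideanLin v‖ ≤ C * (s ^ k * ‖v‖) := by
  obtain ⟨s, hρs, hs1⟩ :=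
    ENNReal.lt_iff_exists_nnreal_btwn.mp (spectralRadius_lt_one_of_forall_norm_lt_one hρ)
  obtain ⟨C, hC⟩ := exists_norm_pow_le_mul_pow_of_spectralRadius_lt hρs
  refine ⟨s, s.2, by exact_mod_cast hs1, C, fun k v => ?_⟩
  calc ‖(M ^ k).toEuclideanLin v‖ ≤ ‖(M ^ k).map (algebraMap ℝ ℂ)‖ * ‖v‖ :=
        norm_toEuclideanLin_le_norm_map_complex _ v
    _ = ‖M.map (algebraMap ℝ ℂ) ^ k‖ * ‖v‖ := by rw [Matrix.map_pow]
    _ ≤ C * (s : ℝ) ^ k * ‖v‖ := mul_le_mul_of_nonneg_right (hC k) (norm_nonneg v)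
    _ = C * ((s : ℝ) ^ k * ‖v‖) := mul_assoc _ _ _

end MatrixBounds

section WeightedSums

variable {f : ℤ → ℝ} {r : ℝ}

lemma Summable.pow_natAbs_mul_of_le (hf : 0 ≤ f) {r' : ℝ} (hr : 0 ≤ r) (hrr' : r ≤ r')
    (h : Summable fun t : ℤ => r' ^ t.natAbs * f t) :
    Summable fun t : ℤ => r ^ t.natAbs * f t :=
  h.of_nonneg_of_le (fun t => mul_nonneg (pow_nonneg hr _) (hf t))
    fun t => mul_le_mul_of_nonneg_right (pow_le_pow_left₀ hr hrr' _) (hf t)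

lemma pow_natAbs_mul_pow_le (hr : 0 < r) (hr1 : r ≤ 1) {q : ℝ} (hq : 0 ≤ q) (t : ℤ) (k : ℕ) :
    r ^ t.natAbs * q ^ k ≤ r ^ (t - k).natAbs * (q / r) ^ k := by
  have hrk : r ^ t.natAbs * r ^ k ≤ r ^ (t - k).natAbs := by
    rw [← pow_add]
    exact pow_le_pow_of_le_one hr.le hr1 (by simpa using Int.natAbs_sub_le t k)
  calc r ^ t.natAbs * q ^ k = r ^ t.natAbs * r ^ k * (q / r) ^ k := by
        rw [div_pow, mul_assoc, mul_div_cancel₀ _ (pow_ne_zero k hr.ne')]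
    _ ≤ r ^ (t - k).natAbs * (q / r) ^ k :=
        mul_le_mul_of_nonneg_right hrk (pow_nonneg (div_nonneg hq hr.le) k)

lemma summable_pow_natAbs_mul_geometric_convolution (hf : 0 ≤ f) (hr : 0 < r) (hr1 : r ≤ 1)
    {q : ℝ} (hq : 0 ≤ q) (hqr : q < r) (h : Summable fun t : ℤ => r ^ t.natAbs * f t) :
    Summable fun p : ℤ × ℕ => r ^ p.1.natAbs * (q ^ p.2 * f (p.1 - p.2)) := by
  have hqr0 : 0 ≤ q / r := div_nonneg hq hr.le
  have hprod : Summable fun p : ℤ × ℕ => r ^ p.1.natAbs * f p.1 * (q / r) ^ p.2 :=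
    h.mul_of_nonneg (summable_geometric_of_lt_one hqr0 ((div_lt_one hr).mpr hqr))
      (fun t => mul_nonneg (pow_nonneg hr.le _) (hf t)) (fun k => pow_nonneg hqr0 k)
  have hshear : Function.Injective fun p : ℤ × ℕ => (p.1 - p.2, p.2) := by
    rintro ⟨t, k⟩ ⟨t', k'⟩ h
    simp only [Prod.mk.injEq] at h ⊢
    omega
  refine (hprod.comp_injective hshear).of_nonneg_of_le
    (fun p => mul_nonneg (pow_nonneg hr.le _) (mul_nonneg (pow_nonneg hq _) (hf _))) fun p => ?_
  calc r ^ p.1.natAbs * (q ^ p.2 * f (p.1 - p.2))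
      = r ^ p.1.natAbs * q ^ p.2 * f (p.1 - p.2) := (mul_assoc _ _ _).symm
    _ ≤ r ^ (p.1 - p.2).natAbs * (q / r) ^ p.2 * f (p.1 - p.2) :=
        mul_le_mul_of_nonneg_right (pow_natAbs_mul_pow_le hr hr1 hq p.1 p.2) (hf _)
    _ = r ^ (p.1 - p.2).natAbs * f (p.1 - p.2) * (q / r) ^ p.2 := by ring

lemma summable_pow_natAbs_mul_norm_tsum_of_norm_le {E : Type*} [NormedAddCommGroup E]
    {u : ℤ → ℕ → E} (hf : 0 ≤ f) (hr : 0 < r) (hr1 : r ≤ 1) {q C : ℝ} (hq : 0 ≤ q) (hqr : q < r)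
    (hu : ∀ t k, ‖u t k‖ ≤ C * (q ^ k * f (t - k)))
    (h : Summable fun t : ℤ => r ^ t.natAbs * f t) :
    Summable fun t : ℤ => r ^ t.natAbs * ‖∑' k : ℕ, u t k‖ := by
  have hconv := summable_pow_natAbs_mul_geometric_convolution hf hr hr1 hq hqr h
  have hnonneg : 0 ≤ fun p : ℤ × ℕ => r ^ p.1.natAbs * (q ^ p.2 * f (p.1 - p.2)) :=
    fun p => mul_nonneg (pow_nonneg hr.le _) (mul_nonneg (pow_nonneg hq _) (hf _))
  refine ((summable_prod_of_nonneg hnonneg).mp hconv).2.mul_left C |>.of_nonneg_of_le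
    (fun t => by positivity) fun t => ?_
  have hinner : Summable fun k : ℕ => q ^ k * f (t - k) :=
    (summable_mul_left_iff (pow_ne_zero t.natAbs hr.ne')).mp (hconv.prod_factor t)
  have hut : ‖∑' k : ℕ, u t k‖ ≤ C * ∑' k : ℕ, q ^ k * f (t - k) :=
    tsum_of_norm_bounded (hinner.hasSum.mul_left C) (hu t)
  calc r ^ t.natAbs * ‖∑' k : ℕ, u t k‖
      ≤ r ^ t.natAbs * (C * ∑' k : ℕ, q ^ k * f (t - k)) :=
        mul_le_mul_of_nonneg_left hut (by positivity)
    _ = C * ∑' k : ℕ, r ^ t.natAbs * (q ^ k * f (t - k)) := by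
        rw [tsum_mul_left]; ring

end WeightedSums

theorem stmt_8 (N : ℕ) (M : Matrix (Fin N) (Fin N) ℝ)
    (hρ : ∀ μ ∈ spectrum ℂ (M.map (algebraMap ℝ ℂ)), ‖μ‖ < 1)
    (ε : ℤ → EuclideanSpace ℝ (Fin N))
    (hε : ∀ r ∈ Set.Ioo (0 : ℝ) 1, Summable fun t : ℤ => r ^ t.natAbs * ‖ε t‖) :
    ∀ r ∈ Set.Ioo (0 : ℝ) 1,
      Summable fun t : ℤ =>
        r ^ t.natAbs * ‖∑' k : ℕ, Matrix.toEuclideanLin (M ^ k) (ε (t - k))‖ := by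
  intro r hr
  obtain ⟨s, hs0, hs1, C, hC⟩ := exists_norm_toEuclideanLin_pow_le M hρ
  obtain ⟨r', hr', hr'1⟩ := exists_between (max_lt hr.2 hs1)
  have hr'0 : 0 < r' := hr.1.trans_le ((le_max_left r s).trans hr'.le)
  refine Summable.pow_natAbs_mul_of_le (fun _ => norm_nonneg _) hr.1.le
    ((le_max_left r s).trans hr'.le) ?_
  exact summable_pow_natAbs_mul_norm_tsum_of_norm_le (fun t => norm_nonneg (ε t)) hr'0 hr'1.le
    hs0 ((le_max_right r s).trans_lt hr') (fun t k => hC k (ε (t - k))) (hε r' ⟨hr'0, hr'1⟩)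
end

section
/- Let Φ be a real N×N matrix with all eigenvalues of modulus strictly greater than 1 (hence Φ invertible), and let (ε_t)_{t∈ℤ} be a subexponential sequence in ℝ^N. Then a sequence (x_t)_{t∈ℤ} in ℝ^N satisfies x_t = Φ x_{t-1} + ε_t for all t ∈ ℤ if and only if there exists v ∈ ℝ^N with x_t = Φ^t v − ∑_{k=1}^∞ Φ^{-k} ε_{t+k} for all t ∈ ℤ; moreover v = lim_{n→∞} Φ^{-n} x_n is unique, and v = 0 whenever (x_t) is subexponential. -/
/-
The inverse of `Φ` has spectral radius `< 1`, so by Gelfand's formula `‖Φ⁻ⁿ‖ ≤ ρⁿ` for large `n`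
and some `ρ < 1`. Against a subexponential `ε` this makes `Sₜ = ∑_{k ≥ 1} Φ⁻ᵏ εₜ₊ₖ` converge, and
`-S` is a particular solution of `xₜ = Φ xₜ₋₁ + εₜ`; every solution is therefore `Φᵗ v - Sₜ`.
Since `Φ⁻ⁿ Sₙ` is a tail of the convergent series `∑ₘ Φ⁻ᵐ εₘ`, `Φ⁻ⁿ xₙ → v`; if `x` is itself
subexponential then `‖Φ⁻ⁿ xₙ‖ ≤ ρⁿ ‖xₙ‖ → 0`, so `v = 0`.
-/

open Filter Topology

theorem eq_zpow_smul_of_forall_eq_smul {G α : Type*} [Group G] [MulAction G α] (g : G)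
    {y : ℤ → α} (hy : ∀ t, y t = g • y (t - 1)) (t : ℤ) : y t = g ^ t • y 0 := by
  induction t using Int.induction_on with
  | zero => rw [zpow_zero, one_smul]
  | succ i ih => rw [hy, add_sub_cancel_right, ih, smul_smul, mul_self_zpow]
  | pred i ih =>
    rw [eq_inv_smul_iff.mpr (hy (-i)).symm, ih, smul_smul, ← zpow_neg_one, ← zpow_add,
      ← sub_eq_neg_add]

theorem forall_eq_smul_add_iff {G E : Type*} [Group G] [AddCommGroup E] [DistribMulAction G E]
    (g : G) {ε p : ℤ → E} (hp : ∀ t, p t = g • p (t - 1) + ε t) (x : ℤ → E) :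
    (∀ t, x t = g • x (t - 1) + ε t) ↔ ∃ v, ∀ t, x t = g ^ t • v + p t := by
  constructor
  · intro hx
    have homogeneous : ∀ t, x t - p t = g • (x (t - 1) - p (t - 1)) := fun t => by
      rw [hx, hp, smul_sub]; abel
    exact ⟨x 0 - p 0, fun t => by
      rw [← eq_zpow_smul_of_forall_eq_smul g homogeneous t, sub_add_cancel]⟩
  · rintro ⟨v, hv⟩ t
    rw [hv, hv, hp t, smul_add, smul_smul, mul_self_zpow, sub_add_cancel, add_assoc]

def IsSubexponential {E : Type*} [Norm E] (y : ℤ → E) : Prop :=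
  ∀ r ∈ Set.Ioo (0 : ℝ) 1, Summable fun t : ℤ => r ^ t.natAbs * ‖y t‖

namespace IsSubexponential

variable {E : Type*} [SeminormedAddGroup E] {y : ℤ → E} {ρ : ℝ}

theorem summable_pow_mul_norm_add (hy : IsSubexponential y) (hρ : ρ ∈ Set.Ioo (0 : ℝ) 1)
    (t : ℤ) : Summable fun k : ℕ => ρ ^ k * ‖y (t + k)‖ := by
  have hρ₀ := hρ.1
  have hshift : Summable fun k : ℕ => ρ ^ (t + k).natAbs * ‖y (t + k)‖ :=
    (hy ρ hρ).comp_injective (add_right_injective t |>.comp Nat.cast_injective)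
  refine (hshift.mul_left (ρ ^ t.natAbs)⁻¹).of_nonneg_of_le (fun k => by positivity) fun k => ?_
  -- `|t + k| ≤ |t| + k`, so `ρ ^ k ≤ ρ ^ (-|t|) ρ ^ |t + k|`
  rw [← mul_assoc]
  gcongr ?_ * _
  rw [inv_mul_eq_div, le_div_iff₀ (by positivity), ← pow_add]
  exact pow_le_pow_of_le_one hρ₀.le hρ.2.le
    ((Int.natAbs_add_le t k).trans (by rw [Int.natAbs_natCast, add_comm]))

theorem tendsto_pow_mul_norm (hy : IsSubexponential y) (hρ : ρ ∈ Set.Ioo (0 : ℝ) 1) :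
    Tendsto (fun n : ℕ => ρ ^ n * ‖y n‖) atTop (𝓝 0) := by
  simpa [Function.comp_def] using ((hy ρ hρ).comp_injective Nat.cast_injective).tendsto_atTop_zero

end IsSubexponential

section ForwardSum

variable {𝕜 E : Type*} [NontriviallyNormedField 𝕜] [NormedAddCommGroup E] [NormedSpace 𝕜 E]

noncomputable def forwardSum (u : (E →L[𝕜] E)ˣ) (ε : ℤ → E) (t : ℤ) : E :=
  ∑' k : ℕ, u ^ (-(k : ℤ) - 1) • ε (t + k + 1)

theorem forwardSum_eq_tsum (u : (E →L[𝕜] E)ˣ) (ε : ℤ → E) (t : ℤ) :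
    forwardSum u ε t = ∑' k : ℕ, u ^ (-((k + 1 : ℕ) : ℤ)) • ε (t + (k + 1 : ℕ)) := by
  simp only [forwardSum, Nat.cast_add, Nat.cast_one, neg_add', add_assoc]

theorem tendsto_zpow_neg_smul_forwardSum (u : (E →L[𝕜] E)ˣ) (ε : ℤ → E) :
    Tendsto (fun n : ℕ => u ^ (-(n : ℤ)) • forwardSum u ε n) atTop (𝓝 0) := by
  have tail (n : ℕ) : u ^ (-(n : ℤ)) • forwardSum u ε n =
      ∑' k : ℕ, u ^ (-((k + (n + 1) : ℕ) : ℤ)) • ε ((k + (n + 1) : ℕ) : ℤ) := by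
    rw [forwardSum, ← tsum_const_smul']
    congr with k
    rw [smul_smul, ← zpow_add]
    push_cast
    ring_nf
  simp only [tail]
  exact (tendsto_sum_nat_add fun m : ℕ => u ^ (-(m : ℤ)) • ε m).comp (tendsto_add_atTop_nat 1)

theorem tendsto_zpow_neg_smul_of_eq_zpow_smul_sub_forwardSum {u : (E →L[𝕜] E)ˣ} {ε x : ℤ → E}
    {v : E} (hx : ∀ t, x t = u ^ t • v - forwardSum u ε t) :
    Tendsto (fun n : ℕ => u ^ (-(n : ℤ)) • x n) atTop (𝓝 v) := by
  have (n : ℕ) : u ^ (-(n : ℤ)) • x n = v - u ^ (-(n : ℤ)) • forwardSum u ε n := by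
    rw [hx, smul_sub, smul_smul, ← zpow_add, neg_add_cancel, zpow_zero, one_smul]
  simpa only [this, sub_zero] using
    tendsto_const_nhds.sub (tendsto_zpow_neg_smul_forwardSum u ε)

variable {u : (E →L[𝕜] E)ˣ} {ρ : ℝ}
  (hu : ∀ᶠ n : ℕ in atTop, ‖((u⁻¹ ^ n : (E →L[𝕜] E)ˣ) : E →L[𝕜] E)‖ ≤ ρ ^ n)
include hu

theorem eventually_norm_zpow_neg_smul_le :
    ∀ᶠ n : ℕ in atTop, ∀ x : E, ‖u ^ (-(n : ℤ)) • x‖ ≤ ρ ^ n * ‖x‖ := by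
  filter_upwards [hu] with n hn x
  rw [zpow_neg, zpow_natCast, ← inv_pow]
  exact ((u⁻¹ ^ n : (E →L[𝕜] E)ˣ) : E →L[𝕜] E).le_opNorm x |>.trans
    (mul_le_mul_of_nonneg_right hn (norm_nonneg x))

variable (hρ : ρ ∈ Set.Ioo (0 : ℝ) 1)
include hρ

theorem IsSubexponential.tendsto_zpow_neg_smul {x : ℤ → E} (hx : IsSubexponential x) :
    Tendsto (fun n : ℕ => u ^ (-(n : ℤ)) • x n) atTop (𝓝 0) :=
  squeeze_zero_norm' ((eventually_norm_zpow_neg_smul_le hu).mono fun _ hn => hn _)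
    (hx.tendsto_pow_mul_norm hρ)

variable [CompleteSpace E]

theorem summable_zpow_neg_smul {ε : ℤ → E} (hε : IsSubexponential ε) (t : ℤ) :
    Summable fun k : ℕ => u ^ (-(k : ℤ)) • ε (t + k) :=
  .of_norm_bounded_eventually_nat (hε.summable_pow_mul_norm_add hρ t)
    ((eventually_norm_zpow_neg_smul_le hu).mono fun _ hk => hk _)

theorem smul_forwardSum_sub_one {ε : ℤ → E} (hε : IsSubexponential ε) (t : ℤ) :
    u • forwardSum u ε (t - 1) = ε t + forwardSum u ε t := by
  calc u • forwardSum u ε (t - 1) = ∑' k : ℕ, u ^ (-(k : ℤ)) • ε (t + k) := by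
        rw [forwardSum_eq_tsum, ← tsum_const_smul']
        congr with k
        rw [smul_smul, mul_self_zpow]
        push_cast
        ring_nf
    _ = ε t + forwardSum u ε t := by
        rw [(summable_zpow_neg_smul hu hρ hε t).tsum_eq_zero_add, forwardSum_eq_tsum]
        simp

theorem forall_eq_smul_add_iff_exists_eq_zpow_smul_sub_forwardSum {ε : ℤ → E}
    (hε : IsSubexponential ε) (x : ℤ → E) :
    (∀ t, x t = u • x (t - 1) + ε t) ↔ ∃ v, ∀ t, x t = u ^ t • v - forwardSum u ε t := by
  have particular (t : ℤ) : -forwardSum u ε t = u • -forwardSum u ε (t - 1) + ε t := by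
    rw [smul_neg, smul_forwardSum_sub_one hu hρ hε]; abel
  simpa only [← sub_eq_add_neg] using forall_eq_smul_add_iff u particular x

end ForwardSum

theorem exists_eventually_norm_pow_le_of_spectralRadius_lt_one {A : Type*} [NormedRing A]
    [NormedAlgebra ℂ A] [CompleteSpace A] {a : A} (ha : spectralRadius ℂ a < 1) :
    ∃ ρ ∈ Set.Ioo (0 : ℝ) 1, ∀ᶠ n : ℕ in atTop, ‖a ^ n‖ ≤ ρ ^ n := by
  obtain ⟨ρ, haρ, hρ1⟩ := ENNReal.lt_iff_exists_nnreal_btwn.mp ha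
  have hρ0 : (0 : ℝ) < ρ := ENNReal.coe_pos.mp (pos_of_gt haρ)
  refine ⟨ρ, ⟨hρ0, by exact_mod_cast hρ1⟩, ?_⟩
  rw [← ENNReal.ofReal_coe_nnreal] at haρ
  filter_upwards [(spectrum.pow_norm_pow_one_div_tendsto_nhds_spectralRadius a).eventually_lt_const
    haρ, eventually_ne_atTop 0] with n hn hn0
  rw [ENNReal.ofReal_lt_ofReal_iff hρ0, one_div] at hn
  calc ‖a ^ n‖ = (‖a ^ n‖ ^ (n⁻¹ : ℝ)) ^ n := (Real.rpow_inv_natCast_pow (norm_nonneg _) hn0).symm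
    _ ≤ ρ ^ n := pow_le_pow_left₀ (by positivity) hn.le n

theorem spectralRadius_inv_lt_one {A : Type*} [NormedRing A] [NormedAlgebra ℂ A]
    [CompleteSpace A] (w : Aˣ) (hw : ∀ z ∈ spectrum ℂ (w : A), 1 < ‖z‖) :
    spectralRadius ℂ (↑w⁻¹ : A) < 1 := by
  rcases (spectrum ℂ (↑w⁻¹ : A)).eq_empty_or_nonempty with hempty | hne
  · simp [spectralRadius, hempty]
  refine spectrum.spectralRadius_lt_of_forall_lt_of_nonempty hne fun z hz => ?_
  rw [← spectrum.map_inv] at hz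
  have := hw _ (Set.mem_inv.mp hz)
  rw [norm_inv] at this
  have hz0 : z ≠ 0 := by rintro rfl; norm_num at this
  exact_mod_cast (one_lt_inv₀ (norm_pos_iff.mpr hz0)).mp this

namespace Matrix

variable {n : Type*} [Fintype n] [DecidableEq n]

theorem norm_toEuclideanCLM_le_norm_toEuclideanCLM_map_ofReal (M : Matrix n n ℝ) :
    ‖toEuclideanCLM (𝕜 := ℝ) M‖ ≤ ‖toEuclideanCLM (𝕜 := ℂ) (M.map (algebraMap ℝ ℂ))‖ := by
  refine ContinuousLinearMap.opNorm_le_bound _ (norm_nonneg _) fun w => ?_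
  let wℂ : EuclideanSpace ℂ n := WithLp.toLp 2 fun i => (w i : ℂ)
  have norm_eq {v : EuclideanSpace ℝ n} {vℂ : EuclideanSpace ℂ n}
      (h : ∀ i, vℂ i = (v i : ℂ)) : ‖vℂ‖ = ‖v‖ := by
    simp only [EuclideanSpace.norm_eq, h, Complex.norm_real]
  have apply_eq (i : n) : toEuclideanCLM (𝕜 := ℂ) (M.map (algebraMap ℝ ℂ)) wℂ i =
      (toEuclideanCLM (𝕜 := ℝ) M w i : ℂ) := by
    simp [toEuclideanCLM_toLp, mulVec, dotProduct, wℂ]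
  rw [← norm_eq apply_eq, ← norm_eq (v := w) (vℂ := wℂ) fun i => rfl]
  exact ContinuousLinearMap.le_opNorm _ _

theorem isUnit_of_forall_one_lt_norm {M : Matrix n n ℝ}
    (hM : ∀ μ ∈ spectrum ℂ (M.map (algebraMap ℝ ℂ)), 1 < ‖μ‖) : IsUnit M := by
  have hℂ : IsUnit (M.map (algebraMap ℝ ℂ)) := by
    by_contra h
    have := hM 0 ((spectrum.zero_mem_iff ℂ).mpr h)
    norm_num at this
  rw [isUnit_iff_isUnit_det, ← RingHom.mapMatrix_apply, ← RingHom.map_det] at hℂ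
  rw [isUnit_iff_isUnit_det]
  simpa [isUnit_iff_ne_zero] using hℂ

noncomputable def unitsToEuclideanCLM (𝕜 : Type*) [RCLike 𝕜] :
    (Matrix n n 𝕜)ˣ →* (EuclideanSpace 𝕜 n →L[𝕜] EuclideanSpace 𝕜 n)ˣ :=
  Units.map (MonoidHomClass.toMonoidHom (toEuclideanCLM (𝕜 := 𝕜) (n := n)))

@[simp]
theorem coe_unitsToEuclideanCLM {𝕜 : Type*} [RCLike 𝕜] (U : (Matrix n n 𝕜)ˣ) :
    (unitsToEuclideanCLM 𝕜 U : EuclideanSpace 𝕜 n →L[𝕜] EuclideanSpace 𝕜 n) =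
      toEuclideanCLM (𝕜 := 𝕜) (n := n) U :=
  rfl

theorem toEuclideanLin_zpow_apply_eq_zpow_smul {M : Matrix n n ℝ} (hM : IsUnit M) (t : ℤ)
    (y : EuclideanSpace ℝ n) :
    toEuclideanLin (M ^ t) y = unitsToEuclideanCLM ℝ hM.unit ^ t • y := by
  rw [← map_zpow, Units.smul_def, coe_unitsToEuclideanCLM, coe_units_zpow, IsUnit.unit_spec]
  rfl

theorem toEuclideanLin_apply_eq_smul {M : Matrix n n ℝ} (hM : IsUnit M) (y : EuclideanSpace ℝ n) :
    toEuclideanLin M y = unitsToEuclideanCLM ℝ hM.unit • y := by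
  simpa using toEuclideanLin_zpow_apply_eq_zpow_smul hM 1 y

theorem exists_eventually_norm_inv_pow_le {M : Matrix n n ℝ}
    (hM : ∀ μ ∈ spectrum ℂ (M.map (algebraMap ℝ ℂ)), 1 < ‖μ‖) :
    ∃ ρ ∈ Set.Ioo (0 : ℝ) 1, ∀ᶠ k : ℕ in atTop,
      ‖(↑((unitsToEuclideanCLM ℝ (isUnit_of_forall_one_lt_norm hM).unit)⁻¹ ^ k) :
        EuclideanSpace ℝ n →L[ℝ] EuclideanSpace ℝ n)‖ ≤ ρ ^ k := by
  set U := (isUnit_of_forall_one_lt_norm hM).unit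
  let Ψ := unitsToEuclideanCLM ℂ (Units.map (algebraMap ℝ ℂ).mapMatrix.toMonoidHom U)
  have hΨ : ∀ z ∈ spectrum ℂ (Ψ : EuclideanSpace ℂ n →L[ℂ] EuclideanSpace ℂ n), 1 < ‖z‖ := by
    rw [coe_unitsToEuclideanCLM, AlgEquiv.spectrum_eq (toEuclideanCLM (𝕜 := ℂ) (n := n))]
    exact hM
  obtain ⟨ρ, hρ, hρΨ⟩ :=
    exists_eventually_norm_pow_le_of_spectralRadius_lt_one (spectralRadius_inv_lt_one Ψ hΨ)
  refine ⟨ρ, hρ, hρΨ.mono fun k hk => le_trans ?_ hk⟩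
  rw [← Units.val_pow_eq_pow_val, ← map_inv, ← map_pow, ← map_inv, ← map_pow,
    coe_unitsToEuclideanCLM, coe_unitsToEuclideanCLM, ← map_inv, ← map_pow, Units.coe_map,
    RingHom.toMonoidHom_eq_coe, MonoidHom.coe_coe, RingHom.mapMatrix_apply]
  exact norm_toEuclideanCLM_le_norm_toEuclideanCLM_map_ofReal _

end Matrix

open Matrix Filter Topology

theorem stmt_18 (N : ℕ) (Φ : Matrix (Fin N) (Fin N) ℝ)
    (hΦ : ∀ μ ∈ spectrum ℂ (Φ.map (algebraMap ℝ ℂ)), 1 < ‖μ‖)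
    (ε : ℤ → EuclideanSpace ℝ (Fin N))
    (hε : ∀ r ∈ Set.Ioo (0 : ℝ) 1, Summable fun t : ℤ => r ^ t.natAbs * ‖ε t‖)
    (x : ℤ → EuclideanSpace ℝ (Fin N)) :
    ((∀ t : ℤ, x t = Matrix.toEuclideanLin Φ (x (t - 1)) + ε t) ↔
      ∃ v : EuclideanSpace ℝ (Fin N), ∀ t : ℤ,
        x t = Matrix.toEuclideanLin (Φ ^ t) v -
          ∑' k : ℕ, Matrix.toEuclideanLin (Φ ^ (-(k : ℤ) - 1)) (ε (t + k + 1))) ∧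
    ((∀ t : ℤ, x t = Matrix.toEuclideanLin Φ (x (t - 1)) + ε t) →
      ∀ v : EuclideanSpace ℝ (Fin N),
        (∀ t : ℤ, x t = Matrix.toEuclideanLin (Φ ^ t) v -
          ∑' k : ℕ, Matrix.toEuclideanLin (Φ ^ (-(k : ℤ) - 1)) (ε (t + k + 1))) →
        Tendsto (fun n : ℕ => Matrix.toEuclideanLin (Φ ^ (-(n : ℤ))) (x n)) atTop (𝓝 v) ∧
        ((∀ r ∈ Set.Ioo (0 : ℝ) 1, Summable fun t : ℤ => r ^ t.natAbs * ‖x t‖) → v = 0)) := by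
  have hunit := isUnit_of_forall_one_lt_norm hΦ
  obtain ⟨ρ, hρ, hu⟩ := exists_eventually_norm_inv_pow_le hΦ
  simp only [toEuclideanLin_zpow_apply_eq_zpow_smul hunit, toEuclideanLin_apply_eq_smul hunit]
  refine ⟨forall_eq_smul_add_iff_exists_eq_zpow_smul_sub_forwardSum hu hρ hε x,
    fun _ v hv => ⟨tendsto_zpow_neg_smul_of_eq_zpow_smul_sub_forwardSum hv, fun hx => ?_⟩⟩
  exact tendsto_nhds_unique (tendsto_zpow_neg_smul_of_eq_zpow_smul_sub_forwardSum hv)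
    (IsSubexponential.tendsto_zpow_neg_smul hu hρ hx)
end
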